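/- For every positive integers k, κ, m, r with κ ≤ m there exist integers n₀ and 0 = q₀ < q₁ < ... < q_m = n₀ such that: for every N ≥ n₀, every finite alphabet Λ with k elements, and every r-coloring c of Λ^N × [{0,...,N-1}]^κ, there exists an m-dimensional κ*-combinatorial subspace X, generated by an m-dimensional variable word w whose wildcard set of vᵢ is contained in [qᵢ, q_{i+1}) for each i, such that c is strongly *-insensitive in X. -/

import Mathlib

/-!
The blocks are filled from the last one down. Block `s` is filled with a Hales–Jewett line for
the coloring of its fillings by the color of the whole word, read as a function of everything
that color may still depend on: the letters below block `s` (not chosen yet), the letters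
substituted for the later variables, and the marked set, whose positions lie below block `s` or
are first occurrences of later variables. These data are boundedly many in terms of `q_s`, `k`,
`m` and `r` only, so a block of Hales–Jewett length for that many colors suffices, independently
of `N`. The wildcards of the line become the variable `v_s`, and its letter no longer affects the
color. Letters outside `F` are then changed one variable at a time.
-/

namespace DR

/-- Substitution of letters into an `m`-dimensional variable word. -/
def subst {N m : ℕ} {Λ : Type} (w : Fin N → Λ ⊕ Fin m) (a : Fin m → Λ) : Fin N → Λ :=
  fun j => Sum.elim id a (w j)

/-- `w` is an `m`-dimensional variable word of length `N` over `Λ`: every variable occurs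
and the wildcard sets are in block position. -/
def IsVarWordM {N m : ℕ} {Λ : Type} (w : Fin N → Λ ⊕ Fin m) : Prop :=
  (∀ i : Fin m, ∃ j, w j = Sum.inr i) ∧
  (∀ (j j' : Fin N) (i i' : Fin m),
    w j = Sum.inr i → w j' = Sum.inr i' → i < i' → j < j')

/-- `j` is the first occurrence `ℓ^w_i` of the variable `v_i` in `w`. -/
def IsFirstOcc {N m : ℕ} {Λ : Type} (w : Fin N → Λ ⊕ Fin m) (i : Fin m) (j : Fin N) : Prop :=
  w j = Sum.inr i ∧ ∀ j' : Fin N, w j' = Sum.inr i → j ≤ j'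

/-- `c` is `L*`-insensitive in the `κ*`-combinatorial subspace generated by `w`. -/
def LStarIns (κ : ℕ) {N m r : ℕ} {Λ : Type}
    (c : (Fin N → Λ) → Finset (Fin N) → Fin r) (L : Set Λ)
    (w : Fin N → Λ ⊕ Fin m) : Prop :=
  ∀ lf : Fin m → Fin N, (∀ i, IsFirstOcc w i (lf i)) →
  ∀ F : Finset (Fin m), F.card = κ →
  ∀ a a' : Fin m → Λ, (∀ i ∈ F, a i = a' i) →
    (∀ j : Fin m, a j ∉ L → a j = a' j) → (∀ j : Fin m, a' j ∉ L → a j = a' j) →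
    c (subst w a) (F.image lf) = c (subst w a') (F.image lf)

/-- `c` is strongly `*`-insensitive in the `κ*`-combinatorial subspace generated by `w`. -/
def StrongStarIns (κ : ℕ) {N m r : ℕ} {Λ : Type}
    (c : (Fin N → Λ) → Finset (Fin N) → Fin r)
    (w : Fin N → Λ ⊕ Fin m) : Prop :=
  ∀ lf : Fin m → Fin N, (∀ i, IsFirstOcc w i (lf i)) →
  ∀ F : Finset (Fin m), F.card = κ →
  ∀ a a' : Fin m → Λ, (∀ i ∈ F, a i = a' i) →
    c (subst w a) (F.image lf) = c (subst w a') (F.image lf)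

/-- The wildcard set of `v_i` in `w` is contained in `[q i, q (i+1))` for each `i`. -/
def Compatible {N m : ℕ} {Λ : Type} (w : Fin N → Λ ⊕ Fin m) (q : Fin (m + 1) → ℕ) : Prop :=
  ∀ (j : Fin N) (i : Fin m), w j = Sum.inr i →
    q i.castSucc ≤ (j : ℕ) ∧ (j : ℕ) < q i.succ

/-- The `κ*`-combinatorial subspace generated by `w`, as a subset of
`Λ^N × [{0,...,N-1}]^κ`. -/
def starSubspace (κ : ℕ) {N m : ℕ} {Λ : Type} (w : Fin N → Λ ⊕ Fin m) :
    Set ((Fin N → Λ) × Finset (Fin N)) :=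
  {p | (∃ a : Fin m → Λ, p.1 = subst w a) ∧
    ∃ F : Finset (Fin m), F.card = κ ∧
      ∃ lf : Fin m → Fin N, (∀ i, IsFirstOcc w i (lf i)) ∧ p.2 = F.image lf}

open Combinatorics Finset Function

def HasMonoLines (α ι : Type) (R : ℕ) : Prop :=
  ∀ (C : Type) [Fintype C], Fintype.card C ≤ R →
    ∀ f : (ι → α) → C, ∃ l : Line α ι, l.IsMono f

theorem exists_hasMonoLines (k R : ℕ) (hk : 0 < k) :
    ∃ n : ℕ, ∀ (α : Type) [Fintype α], Fintype.card α = k →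
      ∀ (ι : Type) [Fintype ι], n ≤ Fintype.card ι → HasMonoLines α ι R := by
  obtain ⟨ι₀, _, hι₀⟩ := Line.exists_mono_in_high_dimension (Fin k) (Fin R)
  refine ⟨Fintype.card ι₀, fun α _ hα ι _ hι C _ hC f => ?_⟩
  obtain ⟨e⟩ : Nonempty (α ≃ Fin k) := ⟨Fintype.equivFinOfCardEq hα⟩
  obtain ⟨g⟩ : Nonempty (ι₀ ↪ ι) := Embedding.nonempty_of_card_le hι
  obtain ⟨h⟩ : Nonempty (C ↪ Fin R) := Embedding.nonempty_of_card_le (by simpa using hC)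
  have a₀ : α := e.symm ⟨0, hk⟩
  let pad (y : ι₀ → α) : ι → α := extend g y fun _ => a₀
  obtain ⟨l₀, col, hcol⟩ := hι₀ fun y => h (f (pad (e.symm ∘ y)))
  let l : Line α ι :=
    ⟨extend g (fun i => (l₀.idxFun i).map e.symm) fun _ => some a₀,
      ⟨g l₀.proper.choose, by simp [g.injective.extend_apply, l₀.proper.choose_spec]⟩⟩
  have hl (x : α) : l x = pad (e.symm ∘ l₀ (e x)) := by
    funext i
    simp only [l, pad, Line.coe_apply, apply_extend (fun o => Option.getD o x)]
    congr 1
    funext i₀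
    show _ = e.symm ((l₀.idxFun i₀).getD (e x))
    rw [← Option.getD_map e.symm, e.symm_apply_apply]
    rfl
  refine ⟨l, f (l a₀), fun x => h.injective ?_⟩
  rw [hl, hl]
  exact (hcol _).trans (hcol _).symm

theorem eq_of_forall_update_eq {ι α β : Type*} [Fintype ι] [DecidableEq ι]
    {g : (ι → α) → β} {S : Set ι} (hg : ∀ x, ∀ i ∉ S, ∀ b, g (update x i b) = g x)
    {x y : ι → α} (hxy : ∀ i ∈ S, x i = y i) : g x = g y := by
  suffices ∀ D : Finset ι, ∀ x, (∀ i ∉ D, x i = y i) → (∀ i ∈ S, x i = y i) → g x = g y from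
    this Finset.univ x (by simp) hxy
  intro D
  induction D using Finset.induction_on with
  | empty => exact fun x hx _ => congrArg g (funext fun i => hx i (Finset.notMem_empty i))
  | insert i D _ ih =>
    intro x hx hS
    have hxi : g (update x i (y i)) = g x := by
      by_cases hiS : i ∈ S
      · rw [← hS i hiS, update_eq_self]
      · exact hg x i hiS _
    rw [← hxi]
    refine ih _ (fun j hj => ?_) (fun j hj => ?_) <;> rcases eq_or_ne j i with rfl | hji
    · simp
    · simpa [hji] using hx j (by simp [hji, hj])
    · simp
    · simpa [hji] using hS j hj

section Words

variable {N m : ℕ} {Λ : Type}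

theorem subst_update_of_forall_ne {w : Fin N → Λ ⊕ Fin m} {i : Fin m}
    (hi : ∀ p, w p ≠ Sum.inr i) (a : Fin m → Λ) (b : Λ) :
    subst w (update a i b) = subst w a := by
  funext p
  unfold subst
  rcases h : w p with x | j
  · rfl
  · exact update_of_ne (by rintro rfl; exact hi p h) _ _

theorem isFirstOcc_congr {w w' : Fin N → Λ ⊕ Fin m} {i : Fin m}
    (h : ∀ p, w p = Sum.inr i ↔ w' p = Sum.inr i) (p : Fin N) :
    IsFirstOcc w i p ↔ IsFirstOcc w' i p := by
  simp only [IsFirstOcc, h]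

def InBlock (Q : ℕ → ℕ) (s : ℕ) (p : Fin N) : Prop := Q s ≤ p ∧ (p : ℕ) < Q (s + 1)

instance (Q : ℕ → ℕ) (s : ℕ) : DecidablePred (InBlock (N := N) Q s) :=
  fun _ => instDecidableAnd

abbrev Block (Q : ℕ → ℕ) (N s : ℕ) : Type := Subtype (InBlock (N := N) Q s)

noncomputable def placeLine (Q : ℕ → ℕ) (w : Fin N → Λ ⊕ Fin m) (s : Fin m)
    (l : Line Λ (Block Q N s)) : Fin N → Λ ⊕ Fin m :=
  extend Subtype.val (fun p => (l.idxFun p).elim (Sum.inr s) Sum.inl) w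

variable {Q : ℕ → ℕ} {w : Fin N → Λ ⊕ Fin m} {s : Fin m} {l : Line Λ (Block Q N s)}

theorem subst_placeLine (a : Fin m → Λ) :
    subst (placeLine Q w s l) a = extend Subtype.val (l (a s)) (subst w a) := by
  funext p
  rw [subst, placeLine, apply_extend (Sum.elim id a)]
  congr 1
  funext q
  simp only [comp_apply, Line.coe_apply]
  cases l.idxFun q <;> rfl

theorem exists_placeLine_eq_inr_self : ∃ p, placeLine Q w s l p = Sum.inr s := by
  obtain ⟨q, hq⟩ := l.proper
  exact ⟨q, by rw [placeLine, extend_val_apply q.2, hq]; rfl⟩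

theorem placeLine_eq_inr_iff (hw : ∀ (p : Block Q N s) i, w p ≠ Sum.inr i) {i : Fin m}
    (hi : i ≠ s) (p : Fin N) : placeLine Q w s l p = Sum.inr i ↔ w p = Sum.inr i := by
  by_cases hp : InBlock Q s p
  · rw [placeLine, extend_val_apply hp, iff_false_right (hw ⟨p, hp⟩ i)]
    cases l.idxFun ⟨p, hp⟩ <;> simp [hi.symm]
  · rw [placeLine, extend_val_apply' hp]

end Words

def colorBound (k m r q : ℕ) : ℕ := r ^ (k ^ q * k ^ m * 2 ^ (q + m))

section Construction

variable {N m r : ℕ} {Λ : Type} (c : (Fin N → Λ) → Finset (Fin N) → Fin r) (Q : ℕ → ℕ)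

/-- The invariant of the construction after blocks `s, s + 1, …` are built: the letters `y` below
block `s` are arbitrary since those blocks are not built yet. -/
structure GoodFrom (s : ℕ) (w : Fin N → Λ ⊕ Fin m) : Prop where
  var_inBlock : ∀ p i, w p = Sum.inr i → s ≤ i ∧ InBlock Q i p
  var_occurs : ∀ i : Fin m, s ≤ i → ∃ p, w p = Sum.inr i
  color_update_eq : ∀ i : Fin m, s ≤ i → ∀ (y : {p : Fin N // (p : ℕ) < Q s} → Λ)
    (a : Fin m → Λ) (b : Λ) (T : Finset (Fin N)),
    (∀ p ∈ T, (p : ℕ) < Q i ∨ ∃ j, i < j ∧ IsFirstOcc w j p) →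
    c (extend Subtype.val y (subst w (update a i b))) T = c (extend Subtype.val y (subst w a)) T

theorem goodFrom_const (a₀ : Λ) : GoodFrom c Q m fun _ : Fin N => (Sum.inl a₀ : Λ ⊕ Fin m) where
  var_inBlock _ _ h := (Sum.inl_ne_inr h).elim
  var_occurs i hi := absurd i.2 (not_lt.2 hi)
  color_update_eq i hi := absurd i.2 (not_lt.2 hi)

open Classical in
noncomputable def markable (w : Fin N → Λ ⊕ Fin m) (B : ℕ) : Finset (Fin N) :=
  Finset.univ.filter fun p => (p : ℕ) < B ∨ ∃ j, IsFirstOcc w j p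

abbrev BlockCtx (w : Fin N → Λ ⊕ Fin m) (s : ℕ) : Type :=
  ({p : Fin N // (p : ℕ) < Q s} → Λ) × (Fin m → Λ) × (markable w (Q s)).powerset

/-- The color of a filling `x` of block `s`, as a function of all other data the color of the
final word may depend on. -/
noncomputable def blockColoring (w : Fin N → Λ ⊕ Fin m) (s : Fin m) (x : Block Q N s → Λ) :
    BlockCtx Q w s → Fin r :=
  fun ⟨y, a, T⟩ => c (extend Subtype.val y (extend Subtype.val x (subst w a))) T

variable {c Q}

theorem card_firstOcc_le (w : Fin N → Λ ⊕ Fin m) [DecidablePred fun p => ∃ j, IsFirstOcc w j p] :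
    #{p | ∃ j, IsFirstOcc w j p} ≤ m := by
  calc #{p | ∃ j, IsFirstOcc w j p}
      ≤ #(Finset.univ.map (Embedding.inr : Fin m ↪ Λ ⊕ Fin m)) := by
        refine Finset.card_le_card_of_injOn w (fun p hp => ?_) fun p hp p' hp' hpp' => ?_
        · obtain ⟨j, hj⟩ := (Finset.mem_filter.1 hp).2
          simp [hj.1]
        · obtain ⟨j, hj⟩ := (Finset.mem_filter.1 (Finset.mem_coe.1 hp)).2
          obtain ⟨j', hj'⟩ := (Finset.mem_filter.1 (Finset.mem_coe.1 hp')).2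
          obtain rfl : j = j' := Sum.inr_injective (hj.1.symm.trans (hpp'.trans hj'.1))
          exact le_antisymm (hj.2 p' hj'.1) (hj'.2 p hj.1)
    _ = m := by simp

theorem card_markable_le (w : Fin N → Λ ⊕ Fin m) (B : ℕ) : #(markable w B) ≤ B + m := by
  classical
  rw [markable, Finset.filter_or]
  refine (Finset.card_union_le _ _).trans (add_le_add ?_ ?_)
  · convert (Fin.card_filter_val_lt (n := N) (m := B)).trans_le (min_le_right _ _)
  · convert card_firstOcc_le w

open Classical in
theorem card_blockColorings_le [Fintype Λ] [Nonempty Λ] (hr : 0 < r) (w : Fin N → Λ ⊕ Fin m)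
    (s : ℕ) : Fintype.card (BlockCtx Q w s → Fin r) ≤ colorBound (Fintype.card Λ) m r (Q s) := by
  have hprefix : Fintype.card {p : Fin N // (p : ℕ) < Q s} ≤ Q s := by
    rw [Fintype.card_subtype, Fin.card_filter_val_lt]
    exact min_le_right _ _
  rw [Fintype.card_fun, Fintype.card_fin, colorBound]
  refine Nat.pow_le_pow_right hr ?_
  simp only [Fintype.card_prod, Fintype.card_fun, Fintype.card_coe, Finset.card_powerset,
    Fintype.card_fin]
  rw [← mul_assoc]
  gcongr ?_ * _ * ?_
  · exact pow_le_pow_right₀ Fintype.card_pos hprefix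
  · exact pow_le_pow_right₀ one_le_two (card_markable_le w (Q s))

variable {w : Fin N → Λ ⊕ Fin m} {s : Fin m} {l : Line Λ (Block Q N s)}

theorem GoodFrom.ne_inr_of_inBlock (hQ : Monotone Q) (hw : GoodFrom c Q (s + 1) w)
    (p : Block Q N s) (i : Fin m) : w p ≠ Sum.inr i := fun h => by
  obtain ⟨hsi, hi, -⟩ := hw.var_inBlock p i h
  have := hQ hsi
  have := p.2.2
  omega

theorem GoodFrom.isFirstOcc_placeLine_iff (hQ : Monotone Q) (hw : GoodFrom c Q (s + 1) w)
    {j : Fin m} (hj : j ≠ s) (p : Fin N) :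
    IsFirstOcc (placeLine Q w s l) j p ↔ IsFirstOcc w j p :=
  isFirstOcc_congr (fun p => placeLine_eq_inr_iff (hw.ne_inr_of_inBlock hQ) hj p) p

theorem extend_subst_placeLine (hQ : Q s ≤ Q (s + 1)) (y : {p : Fin N // (p : ℕ) < Q s} → Λ)
    {a a' : Fin m → Λ} (ha : a' s = a s) :
    extend Subtype.val y (subst (placeLine Q w s l) a') =
      extend Subtype.val
        (fun p : {p : Fin N // (p : ℕ) < Q (s + 1)} =>
          extend Subtype.val y (subst (placeLine Q w s l) a) p)
        (subst w a') := by
  funext p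
  by_cases h₁ : (p : ℕ) < Q s
  · rw [extend_val_apply (b := p) h₁,
      extend_val_apply (b := p) (h₁.trans_le hQ),
      extend_val_apply (b := p) h₁]
  rw [extend_val_apply' (b := p) h₁, subst_placeLine]
  by_cases h₂ : InBlock Q s p
  · rw [extend_val_apply h₂, extend_val_apply (b := p) h₂.2,
      extend_val_apply' (b := p) h₁, subst_placeLine,
      extend_val_apply h₂, ha]
  · have h₃ : ¬ (p : ℕ) < Q (s + 1) := fun h => h₂ ⟨not_lt.1 h₁, h⟩
    rw [extend_val_apply' h₂, extend_val_apply' (b := p) h₃]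

theorem GoodFrom.color_placeLine_update_of_lt (hQ : Monotone Q) (hw : GoodFrom c Q (s + 1) w)
    {i : Fin m} (hsi : s < i) (y : {p : Fin N // (p : ℕ) < Q s} → Λ) (a : Fin m → Λ) (b : Λ)
    (T : Finset (Fin N))
    (hT : ∀ p ∈ T, (p : ℕ) < Q i ∨ ∃ j, i < j ∧ IsFirstOcc (placeLine Q w s l) j p) :
    c (extend Subtype.val y (subst (placeLine Q w s l) (update a i b))) T =
      c (extend Subtype.val y (subst (placeLine Q w s l) a)) T := by
  rw [extend_subst_placeLine (hQ (Nat.le_succ _)) y (update_of_ne hsi.ne _ _)]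
  conv_rhs => rw [extend_subst_placeLine (hQ (Nat.le_succ _)) y rfl]
  refine hw.color_update_eq i hsi _ a b T fun p hp => (hT p hp).imp_right ?_
  rintro ⟨j, hij, hj⟩
  exact ⟨j, hij, (hw.isFirstOcc_placeLine_iff hQ (hsi.trans hij).ne' p).1 hj⟩

theorem GoodFrom.color_placeLine_update_self (hQ : Monotone Q) (hw : GoodFrom c Q (s + 1) w)
    (hl : l.IsMono (blockColoring c Q w s)) (y : {p : Fin N // (p : ℕ) < Q s} → Λ)
    (a : Fin m → Λ) (b : Λ) (T : Finset (Fin N))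
    (hT : ∀ p ∈ T, (p : ℕ) < Q s ∨ ∃ j, s < j ∧ IsFirstOcc (placeLine Q w s l) j p) :
    c (extend Subtype.val y (subst (placeLine Q w s l) (update a s b))) T =
      c (extend Subtype.val y (subst (placeLine Q w s l) a)) T := by
  classical
  have hT' : T ∈ (markable w (Q s)).powerset := by
    refine mem_powerset.2 fun p hp => ?_
    simp only [markable, mem_filter, mem_univ, true_and]
    refine (hT p hp).imp_right ?_
    rintro ⟨j, hsj, hj⟩
    exact ⟨j, (hw.isFirstOcc_placeLine_iff hQ hsj.ne' p).1 hj⟩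
  have hs : ∀ p, w p ≠ Sum.inr s := fun p h => by
    have := (hw.var_inBlock p s h).1
    omega
  obtain ⟨col, hcol⟩ := hl
  calc c (extend Subtype.val y (subst (placeLine Q w s l) (update a s b))) T
      = blockColoring c Q w s (l b) (y, a, ⟨T, hT'⟩) := by
        rw [subst_placeLine, update_self, subst_update_of_forall_ne hs]
        rfl
    _ = blockColoring c Q w s (l (a s)) (y, a, ⟨T, hT'⟩) := by rw [hcol, hcol]
    _ = c (extend Subtype.val y (subst (placeLine Q w s l) a)) T := by
        rw [subst_placeLine]
        rfl

theorem GoodFrom.goodFrom_placeLine (hQ : Monotone Q) (hw : GoodFrom c Q (s + 1) w)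
    (hl : l.IsMono (blockColoring c Q w s)) : GoodFrom c Q s (placeLine Q w s l) where
  var_inBlock p i h := by
    by_cases hp : InBlock Q s p
    · rw [placeLine, extend_val_apply hp] at h
      cases hq : l.idxFun ⟨p, hp⟩ <;> simp only [hq, Option.elim] at h
      · exact Sum.inr_injective h ▸ ⟨le_rfl, hp⟩
      · exact (Sum.inl_ne_inr h).elim
    · rw [placeLine, extend_val_apply' hp] at h
      exact (hw.var_inBlock p i h).imp_left fun h => by omega
  var_occurs i hi := by
    rcases eq_or_ne i s with rfl | hne
    · exact exists_placeLine_eq_inr_self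
    · obtain ⟨p, hp⟩ := hw.var_occurs i (by have := Fin.val_ne_of_ne hne; omega)
      exact ⟨p, (placeLine_eq_inr_iff (hw.ne_inr_of_inBlock hQ) hne p).2 hp⟩
  color_update_eq i hi := by
    rcases eq_or_ne i s with rfl | hne
    · exact hw.color_placeLine_update_self hQ hl
    · exact hw.color_placeLine_update_of_lt hQ (lt_of_le_of_ne hi hne.symm)

theorem GoodFrom.exists_pred [Fintype Λ] [Nonempty Λ] (hr : 0 < r) (hQ : Monotone Q)
    (hw : GoodFrom c Q (s + 1) w)
    (hHJ : HasMonoLines Λ (Block Q N s) (colorBound (Fintype.card Λ) m r (Q s))) :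
    ∃ w' : Fin N → Λ ⊕ Fin m, GoodFrom c Q s w' := by
  classical
  obtain ⟨l, hl⟩ := hHJ _ (card_blockColorings_le hr w s) (blockColoring c Q w s)
  exact ⟨_, hw.goodFrom_placeLine hQ hl⟩

theorem exists_goodFrom_zero [Fintype Λ] [Nonempty Λ] (hr : 0 < r) (hQ : Monotone Q)
    (hHJ : ∀ s : Fin m, HasMonoLines Λ (Block Q N s) (colorBound (Fintype.card Λ) m r (Q s))) :
    ∃ w : Fin N → Λ ⊕ Fin m, GoodFrom c Q 0 w := by
  suffices ∀ t ≤ m, ∃ w : Fin N → Λ ⊕ Fin m, GoodFrom c Q t w from this 0 m.zero_le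
  intro t ht
  induction ht using Nat.decreasingInduction with
  | self => exact ⟨_, goodFrom_const c Q (Classical.arbitrary Λ)⟩
  | of_succ s hs ih =>
    obtain ⟨w, hw⟩ := ih
    exact hw.exists_pred (s := ⟨s, hs⟩) hr hQ (hHJ ⟨s, hs⟩)

theorem GoodFrom.isVarWordM (hQ : Monotone Q) (hw : GoodFrom c Q 0 w) : IsVarWordM w := by
  refine ⟨fun i => hw.var_occurs i (Nat.zero_le _), fun p p' i i' hp hp' hii' => ?_⟩
  have := (hw.var_inBlock p i hp).2.2
  have := (hw.var_inBlock p' i' hp').2.1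
  have := hQ (show (i : ℕ) + 1 ≤ i' from hii')
  exact Fin.lt_def.2 (by omega)

theorem GoodFrom.compatible (hw : GoodFrom c Q 0 w) : Compatible w fun i => Q i :=
  fun p i h => by simpa [InBlock] using (hw.var_inBlock p i h).2

theorem GoodFrom.strongStarIns (hQ : Monotone Q) (hQ₀ : Q 0 = 0) (hw : GoodFrom c Q 0 w)
    (κ : ℕ) : StrongStarIns κ c w := by
  classical
  intro lf hlf F _ a a' haa'
  refine eq_of_forall_update_eq (g := fun a => c (subst w a) (F.image lf)) (S := F)
    (fun x i hi b => ?_) haa'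
  let y : {p : Fin N // (p : ℕ) < Q 0} → Λ := subst w x ∘ Subtype.val
  have hy (z : Fin N → Λ) : extend Subtype.val y z = z :=
    funext fun p => extend_val_apply' (b := p) (by omega)
  rw [← hy (subst w (update x i b)), ← hy (subst w x)]
  refine hw.color_update_eq i (Nat.zero_le _) y x b _ fun p hp => ?_
  obtain ⟨j, hjF, rfl⟩ := mem_image.1 hp
  rcases lt_trichotomy j i with hji | rfl | hij
  · have := (hw.var_inBlock _ j (hlf j).1).2.2
    have := hQ (show (j : ℕ) + 1 ≤ i from hji)
    exact Or.inl (by omega)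
  · exact absurd hjF hi
  · exact Or.inr ⟨j, hij, hlf j⟩

end Construction

def blockBounds (L : ℕ → ℕ) : ℕ → ℕ
  | 0 => 0
  | s + 1 => blockBounds L s + L (blockBounds L s) + 1

theorem blockBounds_strictMono (L : ℕ → ℕ) : StrictMono (blockBounds L) :=
  strictMono_nat_of_lt_succ fun s => by simp only [blockBounds]; omega

theorem card_block_ge {N : ℕ} (Q : ℕ → ℕ) (s : ℕ) (h : Q (s + 1) ≤ N) :
    Q (s + 1) - Q s ≤ Fintype.card (Block Q N s) := by
  let f (j : Fin (Q (s + 1) - Q s)) : Block Q N s :=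
    ⟨⟨Q s + j, by omega⟩, by simp only [InBlock]; omega⟩
  simpa using Fintype.card_le_of_injective f
    fun j j' h => Fin.ext (by simpa [f] using congrArg (fun p : Block Q N s => (p : ℕ)) h)

theorem hales_jewett_star_general (k κ m r : ℕ) (hk : 0 < k) (hm : 0 < m) (hr : 0 < r) :
    ∃ (n₀ : ℕ) (q : Fin (m + 1) → ℕ), 0 < n₀ ∧ StrictMono q ∧
      q 0 = 0 ∧ q (Fin.last m) = n₀ ∧
      ∀ N : ℕ, n₀ ≤ N → ∀ (Λ : Type) [Fintype Λ], Fintype.card Λ = k →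
        ∀ c : (Fin N → Λ) → Finset (Fin N) → Fin r,
        ∃ w : Fin N → Λ ⊕ Fin m, IsVarWordM w ∧ Compatible w q ∧
          StrongStarIns κ c w := by
  choose n hn using fun R => exists_hasMonoLines k R hk
  set Q := blockBounds fun q => n (colorBound k m r q)
  have hQ : StrictMono Q := blockBounds_strictMono _
  refine ⟨Q m, fun i => Q i, hQ hm, fun i j hij => hQ hij, rfl, rfl, fun N hN Λ _ hΛ c => ?_⟩
  subst hΛ
  have : Nonempty Λ := Fintype.card_pos_iff.1 hk
  have hHJ (s : Fin m) :
      HasMonoLines Λ (Block Q N s) (colorBound (Fintype.card Λ) m r (Q s)) := by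
    refine hn _ Λ rfl _ (le_trans ?_ (card_block_ge Q s ((hQ.monotone s.2).trans hN)))
    simp only [Q, blockBounds]
    omega
  obtain ⟨w, hw⟩ := exists_goodFrom_zero hr hQ.monotone hHJ
  exact ⟨w, hw.isVarWordM hQ.monotone, hw.compatible, hw.strongStarIns hQ.monotone rfl κ⟩

/-- **Starred Hales–Jewett theorem** (Theorem 2.4 of the paper). -/
theorem hales_jewett_star (k κ m r : ℕ) (hk : 0 < k) (hκ : 0 < κ) (hm : 0 < m)
    (hr : 0 < r) (hκm : κ ≤ m) :
    ∃ (n₀ : ℕ) (q : Fin (m + 1) → ℕ), 0 < n₀ ∧ StrictMono q ∧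
      q 0 = 0 ∧ q (Fin.last m) = n₀ ∧
      ∀ N : ℕ, n₀ ≤ N → ∀ (Λ : Type) [Fintype Λ], Fintype.card Λ = k →
        ∀ c : (Fin N → Λ) → Finset (Fin N) → Fin r,
        ∃ w : Fin N → Λ ⊕ Fin m, IsVarWordM w ∧ Compatible w q ∧
          StrongStarIns κ c w :=
  hales_jewett_star_general k κ m r hk hm hr

end DR
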